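/- Let S³ act smoothly on a connected closed manifold Z, fix S¹ ↪ S³, let S → Z be a U(1)-principal bundle to which the S³-action is lifted, let F be a connected manifold with a U(1)-action, and let M := S ×_{U(1)} F. For each connected component Y of Z^{S¹} let a_Y be the weight of the S¹-action on S over Y. If none of the weights a_Y vanish, and if the S¹-action on Z and the U(1)-action on F both have only isolated fixed points, then the induced S¹-action on M has only isolated fixed points. -/

import Mathlib

open Manifold

noncomputable section

/-- `S³` modeled as the compact Lie group of unit quaternions (isomorphic to `SU(2)`). -/
abbrev S3 : Type := Metric.sphere (0 : Quaternion ℝ) 1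

/-- A bundled connected smooth manifold of dimension `m` (not necessarily compact). -/
structure ConnManifold (m : ℕ) : Type 1 where
  M : Type
  [top : TopologicalSpace M]
  [charted : ChartedSpace (EuclideanSpace ℝ (Fin m)) M]
  [smooth : IsManifold (𝓡 m) (⊤ : ℕ∞) M]
  [connected : ConnectedSpace M]

attribute [instance] ConnManifold.top ConnManifold.charted ConnManifold.smooth
  ConnManifold.connected

/-- A smooth action of a topological group `G` on the manifold `X`. -/
structure SmoothAction (m : ℕ) (G : Type) [Group G] [TopologicalSpace G]
    (X : ConnManifold m) : Type where
  act : G → X.M → X.M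
  one_act : ∀ x, act 1 x = x
  mul_act : ∀ g h x, act (g * h) x = act g (act h x)
  smooth : ∀ g, ContMDiff (𝓡 m) (𝓡 m) (⊤ : ℕ∞) (act g)
  cont : Continuous fun p : G × X.M => act p.1 p.2

section Assoc

variable (S F : Type) (actS : Circle → S → S) (actF : Circle → F → F)

/-- the equivalence defining the associated bundle `M = S ×_{U(1)} F`:
`(s·g, f) ∼ (s, g·f)` -/
def AssocRel : (S × F) → (S × F) → Prop :=
  fun q q' => ∃ g : Circle, (actS g q'.1, actF g⁻¹ q'.2) = q

/-- the total space `M = S ×_{U(1)} F` of the associated fibre bundle -/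
def AssocSpace : Type := Quot (AssocRel S F actS actF)

instance [TopologicalSpace S] [TopologicalSpace F] :
    TopologicalSpace (AssocSpace S F actS actF) := instTopologicalSpaceQuot

variable {S F actS actF} (actS3 : S3 → S → S) (ι : Circle →* S3)

/-- a point of `M = S ×_{U(1)} F` is fixed by the `S¹`-action induced (via
`ι : S¹ ↪ S³`) by the lifted `S³`-action `g·(s,f)_∼ = (g·s, f)_∼` -/
def IsS1FixedPt (x : AssocSpace S F actS actF) : Prop :=
  ∀ g : Circle, ∀ q : S × F, Quot.mk (AssocRel S F actS actF) q = x →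
    Quot.mk (AssocRel S F actS actF) (actS3 (ι g) q.1, q.2) = x

end Assoc

/-!
A fixed point `[s, f]` of `M` lies over a fixed point `z = p s` of `Z`. Over `z` the circle acts
on the fibre of `S` through `λ ↦ λ^a`, and `λ ↦ λ^a` is onto for `a ≠ 0`, so `[s, f]` being fixed
forces `f` to be fixed by all of `U(1)`. A local trivialisation `ψ` of `S` near `z` identifies `M`
near `[s, f]` with an open subset of `Z × F` via `[t, e] ↦ (p t, ψ t · e)`, under which fixed
points of `M` go to pairs of fixed points; these are isolated in `Z` and in `F`.
-/

theorem Circle.zpow_surjective {a : ℤ} (ha : a ≠ 0) :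
    Function.Surjective (· ^ a : Circle → Circle) :=
  have : NeZero a := ⟨ha⟩
  (Circle.isQuotientCoveringMap_zpow a).surjective

theorem Quot.exists_isOpen_preimage_eq {α : Type*} [TopologicalSpace α] {r : α → α → Prop}
    {T : Set α} (hT : IsOpen T) (hsat : ∀ a b, r a b → (a ∈ T ↔ b ∈ T)) :
    ∃ O : Set (Quot r), IsOpen O ∧ Quot.mk r ⁻¹' O = T :=
  ⟨{x | Quot.lift (· ∈ T) (fun a b h => propext (hsat a b h)) x}, hT, rfl⟩

section CircleAction

variable {X : Type} {act : Circle → X → X}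

theorem injective_act_of_free (act_one : ∀ x, act 1 x = x)
    (act_mul : ∀ g h x, act (g * h) x = act g (act h x)) (act_free : ∀ g x, act g x = x → g = 1)
    (x : X) : Function.Injective (act · x) := by
  intro g h hgh
  have : act (h⁻¹ * g) x = x := by
    simp only [act_mul] at hgh ⊢
    rw [hgh, ← act_mul, inv_mul_cancel, act_one]
  exact inv_mul_eq_one.mp (act_free _ _ this) |>.symm

theorem act_eq_of_act_mul_eq (act_one : ∀ x, act 1 x = x)
    (act_mul : ∀ g h x, act (g * h) x = act g (act h x)) {c g : Circle} {x y : X}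
    (h : act (c * g) x = act g y) : act c x = y := by
  calc act c x = act g⁻¹ (act (c * g) x) := by rw [← act_mul, mul_comm c g, inv_mul_cancel_left]
    _ = y := by rw [h, ← act_mul, inv_mul_cancel, act_one]

theorem act_fixed_of_fixed (act_mul : ∀ g h x, act (g * h) x = act g (act h x)) {x : X}
    (hx : ∀ g, act g x = x) (c : Circle) (g : Circle) : act g (act c x) = act c x := by
  rw [← act_mul, mul_comm, act_mul, hx]

end CircleAction

section AssocSpace

variable {S F : Type} {actS : Circle → S → S} {actF : Circle → F → F}

theorem assocRel_equivalence (actS_one : ∀ s, actS 1 s = s)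
    (actS_mul : ∀ g h s, actS (g * h) s = actS g (actS h s)) (actF_one : ∀ f, actF 1 f = f)
    (actF_mul : ∀ g h f, actF (g * h) f = actF g (actF h f)) :
    Equivalence (AssocRel S F actS actF) where
  refl q := ⟨1, by rw [inv_one, actS_one, actF_one]⟩
  symm := by
    rintro - ⟨t, e⟩ ⟨g, rfl⟩
    refine ⟨g⁻¹, ?_⟩
    simp only [← actS_mul, ← actF_mul, inv_inv, inv_mul_cancel, mul_inv_cancel, actS_one, actF_one]
  trans := by
    rintro - - ⟨t, e⟩ ⟨g, rfl⟩ ⟨h, rfl⟩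
    refine ⟨g * h, ?_⟩
    simp only [actS_mul, ← actF_mul, mul_inv_rev, mul_comm h⁻¹]

theorem assocSpace_mk_eq_mk_iff (hR : Equivalence (AssocRel S F actS actF)) {q q' : S × F} :
    Quot.mk (AssocRel S F actS actF) q = Quot.mk _ q' ↔ AssocRel S F actS actF q q' :=
  Quot.eq.trans hR.eqvGen_iff

variable {actS3 : S3 → S → S} {ι : Circle →* S3}

theorem IsS1FixedPt.exists_of_mk (hR : Equivalence (AssocRel S F actS actF)) {t : S} {e : F}
    (h : IsS1FixedPt actS3 ι (Quot.mk (AssocRel S F actS actF) (t, e))) (g : Circle) :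
    ∃ c, actS c t = actS3 (ι g) t ∧ actF c⁻¹ e = e := by
  obtain ⟨c, hc⟩ := (assocSpace_mk_eq_mk_iff hR).mp (h g (t, e) rfl)
  exact ⟨c, congrArg Prod.fst hc, congrArg Prod.snd hc⟩

theorem IsS1FixedPt.base_fixed {Z : Type} {p : S → Z} {actZ : S3 → Z → Z}
    (hp : ∀ c t, p (actS c t) = p t) (hproj : ∀ g s, p (actS3 g s) = actZ g (p s))
    (hR : Equivalence (AssocRel S F actS actF)) {t : S} {e : F}
    (h : IsS1FixedPt actS3 ι (Quot.mk (AssocRel S F actS actF) (t, e))) (g : Circle) :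
    actZ (ι g) (p t) = p t := by
  obtain ⟨c, hc, -⟩ := h.exists_of_mk hR g
  rw [← hproj, ← hc, hp]

/-- Write `g = g' ^ (-a)`. Since `ι g'` moves `t` to `g' ^ a · t`, freeness forces the `c` that
undoes it to be `g' ^ a`, so fixedness gives `g · e = c⁻¹ · e = e`. -/
theorem IsS1FixedPt.fibre_fixed (hfree : ∀ t : S, Function.Injective (actS · t))
    (hR : Equivalence (AssocRel S F actS actF)) {a : ℤ} (ha : a ≠ 0) {t : S} {e : F}
    (hwt : ∀ g, actS3 (ι g) t = actS (g ^ a) t)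
    (h : IsS1FixedPt actS3 ι (Quot.mk (AssocRel S F actS actF) (t, e))) (g : Circle) :
    actF g e = e := by
  obtain ⟨g', rfl⟩ := Circle.zpow_surjective (neg_ne_zero.mpr ha) g
  obtain ⟨c, hc, he⟩ := h.exists_of_mk hR g'
  rw [hwt] at hc
  rwa [hfree t hc, ← zpow_neg] at he

def assocChart {Z : Type} (p : S → Z) (ψ : S → Circle) (actF : Circle → F → F) (q : S × F) :
    Z × F :=
  (p q.1, actF (ψ q.1) q.2)

variable {Z : Type} {p : S → Z} {ψ : S → Circle} {U : Set Z}

theorem assocChart_eq_of_assocRel (hp : ∀ c t, p (actS c t) = p t)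
    (hψ : ∀ c t, p t ∈ U → ψ (actS c t) = c * ψ t)
    (actF_mul : ∀ g h f, actF (g * h) f = actF g (actF h f)) {q q' : S × F}
    (hq' : p q'.1 ∈ U) (h : AssocRel S F actS actF q q') :
    assocChart p ψ actF q = assocChart p ψ actF q' := by
  obtain ⟨c, rfl⟩ := h
  simp only [assocChart, hp, hψ c _ hq', ← actF_mul, mul_assoc, mul_comm (ψ q'.1),
    mul_inv_cancel_left]

theorem assocRel_of_assocChart_eq (hfib : ∀ s t, p s = p t → ∃ c, actS c t = s)
    (hψ : ∀ c t, p t ∈ U → ψ (actS c t) = c * ψ t) (actF_one : ∀ f, actF 1 f = f)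
    (actF_mul : ∀ g h f, actF (g * h) f = actF g (actF h f)) {q q' : S × F}
    (hq' : p q'.1 ∈ U) (h : assocChart p ψ actF q = assocChart p ψ actF q') :
    AssocRel S F actS actF q q' := by
  obtain ⟨c, hc⟩ := hfib _ _ (congrArg Prod.fst h)
  have hcf : actF c q.2 = q'.2 :=
    act_eq_of_act_mul_eq actF_one actF_mul <| by
      simpa only [assocChart, ← hc, hψ c _ hq'] using congrArg Prod.snd h
  refine ⟨c, Prod.ext hc ?_⟩
  rw [← hcf, ← actF_mul, inv_mul_cancel, actF_one]

theorem continuousOn_assocChart [TopologicalSpace S] [TopologicalSpace F] [TopologicalSpace Z]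
    (hp : Continuous p) (hψ : ContinuousOn ψ (p ⁻¹' U))
    (hF : Continuous fun q : Circle × F => actF q.1 q.2) :
    ContinuousOn (assocChart p ψ actF) {q | p q.1 ∈ U} :=
  (hp.comp continuous_fst).continuousOn.prodMk <| hF.comp_continuousOn <|
    (hψ.comp continuous_fst.continuousOn fun _ hq => hq).prodMk continuous_snd.continuousOn

theorem AssocSpace.exists_isOpen_mk_preimage_eq [TopologicalSpace S] [TopologicalSpace F]
    [TopologicalSpace Z] (hp_cont : Continuous p) (hp : ∀ c t, p (actS c t) = p t) (hU : IsOpen U)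
    (hψ_cont : ContinuousOn ψ (p ⁻¹' U)) (hψ : ∀ c t, p t ∈ U → ψ (actS c t) = c * ψ t)
    (actF_cont : Continuous fun q : Circle × F => actF q.1 q.2)
    (actF_mul : ∀ g h f, actF (g * h) f = actF g (actF h f)) {N : Set (Z × F)} (hN : IsOpen N) :
    ∃ O : Set (AssocSpace S F actS actF), IsOpen O ∧
      Quot.mk _ ⁻¹' O = {q | p q.1 ∈ U ∧ assocChart p ψ actF q ∈ N} := by
  refine Quot.exists_isOpen_preimage_eq ((continuousOn_assocChart hp_cont hψ_cont
    actF_cont).isOpen_inter_preimage (hU.preimage (hp_cont.comp continuous_fst)) hN) ?_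
  intro q q' h
  obtain ⟨c, rfl⟩ := id h
  simp only [Set.mem_ofPred_eq, hp]
  exact and_congr_right fun hq' => by rw [assocChart_eq_of_assocRel hp hψ actF_mul hq' h]

end AssocSpace

theorem statement13_general
    (dZ dF : ℕ) (Z : ConnManifold dZ)
    (AZ : SmoothAction dZ S3 Z)
    (ι : Circle →* S3)
    -- `S → Z` is a `U(1)`-principal bundle:
    (S : Type) [TopologicalSpace S] (p : S → Z.M) (hp_cont : Continuous p)
    (actS : Circle → S → S)
    (actS_one : ∀ s, actS 1 s = s)
    (actS_mul : ∀ g h s, actS (g * h) s = actS g (actS h s))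
    (actS_free : ∀ g s, actS g s = s → g = 1)
    (hfib : ∀ s t : S, p s = p t ↔ ∃ g : Circle, actS g t = s)
    (htriv : ∀ z : Z.M, ∃ U : Set Z.M, IsOpen U ∧ z ∈ U ∧ ∃ ψ : S → Circle,
      ContinuousOn ψ (p ⁻¹' U) ∧
      (∀ (g : Circle) (s : S), p s ∈ U → ψ (actS g s) = g * ψ s) ∧
      ∀ z' ∈ U, ∀ c : Circle, ∃! s : S, p s = z' ∧ ψ s = c)
    -- the lift of the `S³`-action to `S`, commuting with the principal action:
    (actS3 : S3 → S → S)
    (actS3_proj : ∀ g s, p (actS3 g s) = AZ.act g (p s))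
    -- the fibre `F`, a connected manifold with smooth `U(1)`-action:
    (F : ConnManifold dF) (AF : SmoothAction dF Circle F)
    -- none of the weights `a_Y` vanishes: over every `S¹`-fixed point of `Z` the
    -- `S¹`-action on the fibre of `S` has character `λ ↦ λ^a` with `a ≠ 0`:
    (hweights : ∀ z : Z.M, (∀ g : Circle, AZ.act (ι g) z = z) →
      ∃ a : ℤ, a ≠ 0 ∧ ∀ s, p s = z → ∀ g : Circle, actS3 (ι g) s = actS (g ^ a) s)
    -- the `S¹`-action on `Z` has only isolated fixed points:
    (hZiso : ∀ z : Z.M, (∀ g : Circle, AZ.act (ι g) z = z) →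
      ∃ U ∈ nhds z, ∀ y ∈ U, (∀ g : Circle, AZ.act (ι g) y = y) → y = z)
    -- the `U(1)`-action on `F` has only isolated fixed points:
    (hFiso : ∀ f : F.M, (∀ g : Circle, AF.act g f = f) →
      ∃ U ∈ nhds f, ∀ y ∈ U, (∀ g : Circle, AF.act g y = y) → y = f) :
    -- conclusion: the induced `S¹`-action on `M = S ×_{U(1)} F` has only
    -- isolated fixed points
    ∀ x : AssocSpace S F.M actS AF.act, IsS1FixedPt actS3 ι x →
      ∃ U ∈ nhds x, ∀ y ∈ U, IsS1FixedPt actS3 ι y → y = x := by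
  intro x hx
  obtain ⟨⟨s, f⟩, rfl⟩ := Quot.exists_rep x
  have hR := assocRel_equivalence actS_one actS_mul AF.one_act AF.mul_act
  have hp : ∀ c t, p (actS c t) = p t := fun c t => (hfib _ t).mpr ⟨c, rfl⟩
  have hfree := injective_act_of_free actS_one actS_mul actS_free
  have hz := hx.base_fixed hp actS3_proj hR
  obtain ⟨a, ha, hwt⟩ := hweights (p s) hz
  obtain ⟨U, hU, hsU, ψ, hψc, hψ, -⟩ := htriv (p s)
  obtain ⟨UZ, hUZ, hUZiso⟩ := hZiso (p s) hz
  obtain ⟨UF, hUF, hUFiso⟩ := hFiso (AF.act (ψ s) f) <|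
    act_fixed_of_fixed AF.mul_act (hx.fibre_fixed hfree hR ha (hwt s rfl)) _
  obtain ⟨O, hO, hOpre⟩ := AssocSpace.exists_isOpen_mk_preimage_eq hp_cont hp hU hψc hψ AF.cont
    AF.mul_act (isOpen_interior.prod isOpen_interior) (N := interior UZ ×ˢ interior UF)
  refine ⟨O, hO.mem_nhds ?_, ?_⟩
  · show (s, f) ∈ Quot.mk _ ⁻¹' O
    rw [hOpre]
    exact ⟨hsU, mem_interior_iff_mem_nhds.mpr hUZ, mem_interior_iff_mem_nhds.mpr hUF⟩
  rintro y hy hyfix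
  obtain ⟨⟨t, e⟩, rfl⟩ := Quot.exists_rep y
  replace hy : (t, e) ∈ Quot.mk _ ⁻¹' O := hy
  obtain ⟨-, htZ, heF⟩ := hOpre ▸ hy
  have hts : p t = p s := hUZiso _ (interior_subset htZ) (hyfix.base_fixed hp actS3_proj hR)
  have he := hUFiso _ (interior_subset heF) <|
    act_fixed_of_fixed AF.mul_act (hyfix.fibre_fixed hfree hR ha (hwt t hts)) _
  exact Quot.sound <| assocRel_of_assocChart_eq (fun s t => (hfib s t).mp) hψ AF.one_act
    AF.mul_act hsU (Prod.ext hts he)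

/-- **Lemma 4.3.**  Let `S³` act smoothly on a connected closed manifold `Z`, fix
`S¹ ↪ S³`, let `S → Z` be a `U(1)`-principal bundle to which the `S³`-action is
lifted, let `F` be a connected manifold with a smooth `U(1)`-action, and let
`M = S ×_{U(1)} F`.  If none of the weights `a_Y` of `S` at the components `Y` of
`Z^{S¹}` vanish, and the `S¹`-action on `Z` and the `U(1)`-action on `F` have only
isolated fixed points, then the induced `S¹`-action on `M` has only isolated
fixed points. -/
theorem statement13
    (dZ dF : ℕ) (Z : ConnManifold dZ) (hZc : CompactSpace Z.M)
    (AZ : SmoothAction dZ S3 Z)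
    (ι : Circle →* S3) (hι_cont : Continuous ι) (hι_inj : Function.Injective ι)
    -- `S → Z` is a `U(1)`-principal bundle:
    (S : Type) [TopologicalSpace S] (p : S → Z.M) (hp_cont : Continuous p)
    (hp_surj : Function.Surjective p) (hp_quot : Topology.IsQuotientMap p)
    (actS : Circle → S → S)
    (actS_one : ∀ s, actS 1 s = s)
    (actS_mul : ∀ g h s, actS (g * h) s = actS g (actS h s))
    (actS_cont : Continuous fun q : Circle × S => actS q.1 q.2)
    (actS_free : ∀ g s, actS g s = s → g = 1)
    (hfib : ∀ s t : S, p s = p t ↔ ∃ g : Circle, actS g t = s)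
    (htriv : ∀ z : Z.M, ∃ U : Set Z.M, IsOpen U ∧ z ∈ U ∧ ∃ ψ : S → Circle,
      ContinuousOn ψ (p ⁻¹' U) ∧
      (∀ (g : Circle) (s : S), p s ∈ U → ψ (actS g s) = g * ψ s) ∧
      ∀ z' ∈ U, ∀ c : Circle, ∃! s : S, p s = z' ∧ ψ s = c)
    -- the lift of the `S³`-action to `S`, commuting with the principal action:
    (actS3 : S3 → S → S)
    (actS3_one : ∀ s, actS3 1 s = s)
    (actS3_mul : ∀ g h s, actS3 (g * h) s = actS3 g (actS3 h s))
    (actS3_cont : Continuous fun q : S3 × S => actS3 q.1 q.2)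
    (actS3_proj : ∀ g s, p (actS3 g s) = AZ.act g (p s))
    (actS3_comm : ∀ g c s, actS3 g (actS c s) = actS c (actS3 g s))
    -- the fibre `F`, a connected manifold with smooth `U(1)`-action:
    (F : ConnManifold dF) (AF : SmoothAction dF Circle F)
    -- none of the weights `a_Y` vanishes: over every `S¹`-fixed point of `Z` the
    -- `S¹`-action on the fibre of `S` has character `λ ↦ λ^a` with `a ≠ 0`:
    (hweights : ∀ z : Z.M, (∀ g : Circle, AZ.act (ι g) z = z) →
      ∃ a : ℤ, a ≠ 0 ∧ ∀ s, p s = z → ∀ g : Circle, actS3 (ι g) s = actS (g ^ a) s)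
    -- the `S¹`-action on `Z` has only isolated fixed points:
    (hZiso : ∀ z : Z.M, (∀ g : Circle, AZ.act (ι g) z = z) →
      ∃ U ∈ nhds z, ∀ y ∈ U, (∀ g : Circle, AZ.act (ι g) y = y) → y = z)
    -- the `U(1)`-action on `F` has only isolated fixed points:
    (hFiso : ∀ f : F.M, (∀ g : Circle, AF.act g f = f) →
      ∃ U ∈ nhds f, ∀ y ∈ U, (∀ g : Circle, AF.act g y = y) → y = f) :
    -- conclusion: the induced `S¹`-action on `M = S ×_{U(1)} F` has only
    -- isolated fixed points
    ∀ x : AssocSpace S F.M actS AF.act, IsS1FixedPt actS3 ι x →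
      ∃ U ∈ nhds x, ∀ y ∈ U, IsS1FixedPt actS3 ι y → y = x :=
  statement13_general dZ dF Z AZ ι S p hp_cont actS actS_one actS_mul actS_free hfib htriv actS3
    actS3_proj F AF hweights hZiso hFiso
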